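/- With notation as in the Dieudonné-module setup over an algebraically closed field k of characteristic p > 0: let x₁, x₂, y₁, y₂ ∈ k^× and set M = M_{(x₁,x₂)} and M' = M_{(y₁,y₂)}. Then every isomorphism of Dieudonné modules v : M → M' (a W-linear bijection commuting with the operators F and V) extends uniquely to an isomorphism of Dieudonné modules ṽ : N → N satisfying ṽ((F,V)N) = (F,V)N and ṽ|_M = v. -/
import Mathlib


noncomputable section

namespace Stmt9

@[simp] lemma six0 {α : Type*} (a0 a1 a2 a3 a4 a5 : α) : ![a0,a1,a2,a3,a4,a5] (0 : Fin 6) = a0 := rfl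
@[simp] lemma six1 {α : Type*} (a0 a1 a2 a3 a4 a5 : α) : ![a0,a1,a2,a3,a4,a5] (1 : Fin 6) = a1 := rfl
@[simp] lemma six2 {α : Type*} (a0 a1 a2 a3 a4 a5 : α) : ![a0,a1,a2,a3,a4,a5] (2 : Fin 6) = a2 := rfl
@[simp] lemma six3 {α : Type*} (a0 a1 a2 a3 a4 a5 : α) : ![a0,a1,a2,a3,a4,a5] (3 : Fin 6) = a3 := rfl
@[simp] lemma six4 {α : Type*} (a0 a1 a2 a3 a4 a5 : α) : ![a0,a1,a2,a3,a4,a5] (4 : Fin 6) = a4 := rfl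
@[simp] lemma six5 {α : Type*} (a0 a1 a2 a3 a4 a5 : α) : ![a0,a1,a2,a3,a4,a5] (5 : Fin 6) = a5 := rfl

variable (p : ℕ) [Fact p.Prime] (k : Type) [Field k] [CharP k p] [IsAlgClosed k]

/-- The Witt-vector Frobenius `σ`, a ring automorphism of `W = W(k)`. -/
def σ : WittVector p k ≃+* WittVector p k := WittVector.frobeniusEquiv p k

/-- The operator `F` on `N = D₁₂ ⊕ D₂₁ = W^6`. -/
def Fop (x : Fin 6 → WittVector p k) : Fin 6 → WittVector p k :=
  ![(p : WittVector p k) * σ p k (x 1), (p : WittVector p k) * σ p k (x 2), σ p k (x 0),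
    (p : WittVector p k) * σ p k (x 5), σ p k (x 3), σ p k (x 4)]

/-- The operator `V` on `N = D₁₂ ⊕ D₂₁ = W^6`. -/
def Vop (x : Fin 6 → WittVector p k) : Fin 6 → WittVector p k :=
  ![(p : WittVector p k) * (σ p k).symm (x 2), (σ p k).symm (x 0), (σ p k).symm (x 1),
    (p : WittVector p k) * (σ p k).symm (x 4), (p : WittVector p k) * (σ p k).symm (x 5),
    (σ p k).symm (x 3)]

/-- The `W`-submodule `(F,V)N = F(N) + V(N) = pW × W × W × pW × W × W` of `N = W^6`. -/
def FVN : Submodule (WittVector p k) (Fin 6 → WittVector p k) :=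
  Submodule.comap (LinearMap.proj (R := WittVector p k) (φ := fun _ : Fin 6 => WittVector p k) 0)
      (Ideal.span {(p : WittVector p k)}) ⊓
    Submodule.comap (LinearMap.proj (R := WittVector p k) (φ := fun _ : Fin 6 => WittVector p k) 3)
      (Ideal.span {(p : WittVector p k)})

/-- The vector `([x₁], 0, 0, [x₂], 0, 0) ∈ N`, where `[·]` is the Teichmüller lift. -/
def gen (x : k × k) : Fin 6 → WittVector p k :=
  ![WittVector.teichmuller p x.1, 0, 0, WittVector.teichmuller p x.2, 0, 0]

/-- The `W`-submodule `M_{(x₁,x₂)} = (F,V)N + W·([x₁],0,0,[x₂],0,0)` of `N`. -/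
def Mmod (x : k × k) : Submodule (WittVector p k) (Fin 6 → WittVector p k) :=
  FVN p k ⊔ Submodule.span (WittVector p k) {gen p k x}

set_option linter.unusedSectionVars false

-- basis-type vectors
def E0 : Fin 6 → WittVector p k := ![1,0,0,0,0,0]
def E1 : Fin 6 → WittVector p k := ![0,1,0,0,0,0]
def E2 : Fin 6 → WittVector p k := ![0,0,1,0,0,0]
def E3 : Fin 6 → WittVector p k := ![0,0,0,1,0,0]
def E4 : Fin 6 → WittVector p k := ![0,0,0,0,1,0]
def E5 : Fin 6 → WittVector p k := ![0,0,0,0,0,1]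

lemma mem_FVN_iff (z : Fin 6 → WittVector p k) :
    z ∈ FVN p k ↔ (p : WittVector p k) ∣ z 0 ∧ (p : WittVector p k) ∣ z 3 := by
  simp [FVN, Ideal.mem_span_singleton, Submodule.mem_inf]

lemma Fop_mem_FVN (z : Fin 6 → WittVector p k) : Fop p k z ∈ FVN p k := by
  rw [mem_FVN_iff]; exact ⟨⟨σ p k (z 1), rfl⟩, ⟨σ p k (z 5), rfl⟩⟩

lemma Vop_mem_FVN (z : Fin 6 → WittVector p k) : Vop p k z ∈ FVN p k := by
  rw [mem_FVN_iff]; exact ⟨⟨(σ p k).symm (z 2), rfl⟩, ⟨(σ p k).symm (z 4), rfl⟩⟩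

lemma Fop_add (z z' : Fin 6 → WittVector p k) :
    Fop p k (z + z') = Fop p k z + Fop p k z' := by
  funext i; fin_cases i <;> simp [Fop, mul_add]

lemma Fop_smul (c : WittVector p k) (z : Fin 6 → WittVector p k) :
    Fop p k (c • z) = σ p k c • Fop p k z := by
  funext i; fin_cases i <;> simp [Fop, smul_eq_mul, mul_comm, mul_left_comm]

lemma Vop_add (z z' : Fin 6 → WittVector p k) :
    Vop p k (z + z') = Vop p k z + Vop p k z' := by
  funext i; fin_cases i <;> simp [Vop, mul_add]

lemma Vop_smul (c : WittVector p k) (z : Fin 6 → WittVector p k) :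
    Vop p k (c • z) = (σ p k).symm c • Vop p k z := by
  funext i; fin_cases i <;> simp [Vop, smul_eq_mul, mul_comm, mul_left_comm]

lemma σ_p : σ p k (p : WittVector p k) = p := map_natCast _ p
lemma σs_p : (σ p k).symm (p : WittVector p k) = p := map_natCast _ p

lemma Fop_psmul (z : Fin 6 → WittVector p k) :
    Fop p k ((p : WittVector p k) • z) = (p : WittVector p k) • Fop p k z := by
  rw [Fop_smul, σ_p]

lemma Vop_psmul (z : Fin 6 → WittVector p k) :
    Vop p k ((p : WittVector p k) • z) = (p : WittVector p k) • Vop p k z := by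
  rw [Vop_smul, σs_p]

lemma psmul_mem_FVN (z : Fin 6 → WittVector p k) :
    (p : WittVector p k) • z ∈ FVN p k := by
  rw [mem_FVN_iff]; exact ⟨⟨z 0, rfl⟩, ⟨z 3, rfl⟩⟩

lemma FVN_le_Mmod (x : k × k) : FVN p k ≤ Mmod p k x := le_sup_left

lemma psmul_mem_Mmod (x : k × k) (z : Fin 6 → WittVector p k) :
    (p : WittVector p k) • z ∈ Mmod p k x :=
  FVN_le_Mmod p k x (psmul_mem_FVN p k z)

lemma gen_mem_Mmod (x : k × k) : gen p k x ∈ Mmod p k x :=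
  (le_sup_right : Submodule.span (WittVector p k) {gen p k x} ≤ Mmod p k x)
    (Submodule.mem_span_singleton_self _)

lemma E1_mem_FVN : E1 p k ∈ FVN p k := by rw [mem_FVN_iff]; simp [E1]
lemma E2_mem_FVN : E2 p k ∈ FVN p k := by rw [mem_FVN_iff]; simp [E2]
lemma E4_mem_FVN : E4 p k ∈ FVN p k := by rw [mem_FVN_iff]; simp [E4]
lemma E5_mem_FVN : E5 p k ∈ FVN p k := by rw [mem_FVN_iff]; simp [E5]

lemma pi_dvd_smul (a : Fin 6 → WittVector p k) (h : ∀ i, (p : WittVector p k) ∣ a i) :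
    ∃ u, (p : WittVector p k) • u = a := by
  refine ⟨fun i => (h i).choose, funext fun i => ?_⟩
  have := (h i).choose_spec
  simp [Pi.smul_apply, smul_eq_mul, ← this]

lemma dvd_σ {a : WittVector p k} (h : (p : WittVector p k) ∣ a) :
    (p : WittVector p k) ∣ σ p k a := by
  obtain ⟨c, rfl⟩ := h
  exact ⟨σ p k c, by rw [map_mul, σ_p]⟩

lemma dvd_σs {a : WittVector p k} (h : (p : WittVector p k) ∣ a) :
    (p : WittVector p k) ∣ (σ p k).symm a := by
  obtain ⟨c, rfl⟩ := h
  exact ⟨(σ p k).symm c, by rw [map_mul, σs_p]⟩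

lemma FVN_decomp (z : Fin 6 → WittVector p k) (hz : z ∈ FVN p k) :
    ∃ a b, z = Fop p k a + Vop p k b := by
  obtain ⟨⟨c0, hc0⟩, ⟨c3, hc3⟩⟩ := (mem_FVN_iff p k z).mp hz
  refine ⟨![(σ p k).symm (z 2), 0, 0, (σ p k).symm (z 4), (σ p k).symm (z 5), 0],
      ![σ p k (z 1), 0, σ p k c0, 0, σ p k c3, 0], ?_⟩
  funext i; fin_cases i <;> simp [Fop, Vop, hc0, hc3]

lemma isUnit_teich {x : k} (hx : x ≠ 0) : IsUnit (WittVector.teichmuller p x) :=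
  isUnit_iff_exists_inv.mpr ⟨WittVector.teichmuller p x⁻¹,
    by rw [← map_mul, mul_inv_cancel₀ hx, map_one]⟩

-- identities
lemma I1 (x₁ x₂ : k) :
    Vop p k (gen p k (x₁, x₂)) =
      (σ p k).symm (WittVector.teichmuller p x₁) • E1 p k +
        Fop p k ((σ p k).symm ((σ p k).symm (WittVector.teichmuller p x₂)) • E4 p k) := by
  funext i
  fin_cases i <;> simp [Fop, Vop, gen, E1, E4, smul_eq_mul]

lemma I2 : Vop p k (E1 p k) = E2 p k := by
  funext i; fin_cases i <;> simp [Vop, E1, E2]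

lemma I4 (x₁ x₂ : k) :
    Fop p k (gen p k (x₁, x₂)) =
      σ p k (WittVector.teichmuller p x₂) • E4 p k +
        Vop p k (σ p k (σ p k (WittVector.teichmuller p x₁)) • E1 p k) := by
  funext i
  fin_cases i <;> simp [Fop, Vop, gen, E1, E4, smul_eq_mul]

lemma I5 : Fop p k (E4 p k) = E5 p k := by
  funext i; fin_cases i <;> simp [Fop, E4, E5]

lemma I6 : Fop p k (E1 p k) = (p : WittVector p k) • E0 p k := by
  funext i; fin_cases i <;> simp [Fop, E0, E1]

lemma I7 : Vop p k (E2 p k) = (p : WittVector p k) • E0 p k := by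
  funext i; fin_cases i <;> simp [Vop, E0, E2]

lemma I8 : Fop p k (E5 p k) = (p : WittVector p k) • E3 p k := by
  funext i; fin_cases i <;> simp [Fop, E3, E5]

lemma I9 : Vop p k (E4 p k) = (p : WittVector p k) • E3 p k := by
  funext i; fin_cases i <;> simp [Vop, E3, E4]

set_option linter.unusedSectionVars false
set_option maxHeartbeats 1000000

lemma main_dvd (x₁ x₂ : k) (hx₁ : x₁ ≠ 0) (hx₂ : x₂ ≠ 0)
    (hMF : ∀ z ∈ Mmod p k (x₁, x₂), Fop p k z ∈ Mmod p k (x₁, x₂))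
    (hMV : ∀ z ∈ Mmod p k (x₁, x₂), Vop p k z ∈ Mmod p k (x₁, x₂))
    (P : Submodule (WittVector p k) (Fin 6 → WittVector p k))
    (v : ↥(Mmod p k (x₁, x₂)) ≃ₗ[WittVector p k] ↥P)
    (hvF : ∀ m : ↥(Mmod p k (x₁, x₂)),
      (v ⟨Fop p k (m : Fin 6 → WittVector p k), hMF _ m.2⟩ : Fin 6 → WittVector p k)
        = Fop p k (v m : Fin 6 → WittVector p k))
    (hvV : ∀ m : ↥(Mmod p k (x₁, x₂)),
      (v ⟨Vop p k (m : Fin 6 → WittVector p k), hMV _ m.2⟩ : Fin 6 → WittVector p k)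
        = Vop p k (v m : Fin 6 → WittVector p k))
    (z : Fin 6 → WittVector p k) :
    ∃ u, (p : WittVector p k) • u
        = (v ⟨(p : WittVector p k) • z, psmul_mem_Mmod p k _ z⟩ : Fin 6 → WittVector p k) := by
  have hgen : gen p k (x₁, x₂) ∈ Mmod p k (x₁, x₂) := gen_mem_Mmod p k _
  have hE1 : E1 p k ∈ Mmod p k (x₁, x₂) := FVN_le_Mmod p k _ (E1_mem_FVN p k)
  have hE2 : E2 p k ∈ Mmod p k (x₁, x₂) := FVN_le_Mmod p k _ (E2_mem_FVN p k)
  have hE4 : E4 p k ∈ Mmod p k (x₁, x₂) := FVN_le_Mmod p k _ (E4_mem_FVN p k)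
  have hE5 : E5 p k ∈ Mmod p k (x₁, x₂) := FVN_le_Mmod p k _ (E5_mem_FVN p k)
  -- vE1 ∈ FVN
  have hvE1 : (v ⟨E1 p k, hE1⟩ : Fin 6 → WittVector p k) ∈ FVN p k := by
    set c : WittVector p k := (σ p k).symm (WittVector.teichmuller p x₁) with hc_def
    have hc : IsUnit c := (isUnit_teich p k hx₁).map (σ p k).symm
    set m₁ : Fin 6 → WittVector p k :=
      (σ p k).symm ((σ p k).symm (WittVector.teichmuller p x₂)) • E4 p k with hm₁_def
    have hm₁ : m₁ ∈ Mmod p k (x₁, x₂) :=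
      FVN_le_Mmod p k _ ((FVN p k).smul_mem _ (E4_mem_FVN p k))
    have key : (c • (⟨E1 p k, hE1⟩ : ↥(Mmod p k (x₁, x₂))))
        = ⟨Vop p k (gen p k (x₁, x₂)), hMV _ hgen⟩ - ⟨Fop p k m₁, hMF _ hm₁⟩ := by
      apply Subtype.ext
      simp only [SetLike.val_smul, AddSubgroupClass.coe_sub]
      rw [I1 p k x₁ x₂]
      abel
    have h2 := congrArg (fun t : ↥(Mmod p k (x₁, x₂)) => ((v t : ↥P) : Fin 6 → WittVector p k)) key
    simp only [map_smul, map_sub, SetLike.val_smul, AddSubgroupClass.coe_sub] at h2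
    have hVg : (v ⟨Vop p k (gen p k (x₁, x₂)), hMV _ hgen⟩ : Fin 6 → WittVector p k)
        = Vop p k (v ⟨gen p k (x₁, x₂), hgen⟩ : Fin 6 → WittVector p k) := hvV ⟨_, hgen⟩
    have hFm : (v ⟨Fop p k m₁, hMF _ hm₁⟩ : Fin 6 → WittVector p k)
        = Fop p k (v ⟨m₁, hm₁⟩ : Fin 6 → WittVector p k) := hvF ⟨_, hm₁⟩
    rw [hVg, hFm] at h2
    have hmemc : c • (v ⟨E1 p k, hE1⟩ : Fin 6 → WittVector p k) ∈ FVN p k := by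
      rw [h2]; exact Submodule.sub_mem _ (Vop_mem_FVN p k _) (Fop_mem_FVN p k _)
    obtain ⟨cu, hcu⟩ := hc
    have : (v ⟨E1 p k, hE1⟩ : Fin 6 → WittVector p k)
        = cu⁻¹ • (c • (v ⟨E1 p k, hE1⟩ : Fin 6 → WittVector p k)) := by
      rw [← hcu, ← Units.smul_def, inv_smul_smul]
    rw [this]
    exact Submodule.smul_mem _ _ hmemc
  -- vE2 ∈ FVN
  have hvE2 : (v ⟨E2 p k, hE2⟩ : Fin 6 → WittVector p k) ∈ FVN p k := by
    have heq : (⟨E2 p k, hE2⟩ : ↥(Mmod p k (x₁, x₂))) = ⟨Vop p k (E1 p k), hMV _ hE1⟩ :=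
      Subtype.ext (I2 p k).symm
    rw [heq, hvV ⟨_, hE1⟩]
    exact Vop_mem_FVN p k _
  -- vE4 ∈ FVN
  have hvE4 : (v ⟨E4 p k, hE4⟩ : Fin 6 → WittVector p k) ∈ FVN p k := by
    set c : WittVector p k := σ p k (WittVector.teichmuller p x₂) with hc_def
    have hc : IsUnit c := (isUnit_teich p k hx₂).map (σ p k)
    set m₁ : Fin 6 → WittVector p k :=
      σ p k (σ p k (WittVector.teichmuller p x₁)) • E1 p k with hm₁_def
    have hm₁ : m₁ ∈ Mmod p k (x₁, x₂) :=
      FVN_le_Mmod p k _ ((FVN p k).smul_mem _ (E1_mem_FVN p k))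
    have key : (c • (⟨E4 p k, hE4⟩ : ↥(Mmod p k (x₁, x₂))))
        = ⟨Fop p k (gen p k (x₁, x₂)), hMF _ hgen⟩ - ⟨Vop p k m₁, hMV _ hm₁⟩ := by
      apply Subtype.ext
      simp only [SetLike.val_smul, AddSubgroupClass.coe_sub]
      rw [I4 p k x₁ x₂]
      abel
    have h2 := congrArg (fun t : ↥(Mmod p k (x₁, x₂)) => ((v t : ↥P) : Fin 6 → WittVector p k)) key
    simp only [map_smul, map_sub, SetLike.val_smul, AddSubgroupClass.coe_sub] at h2
    have hVg : (v ⟨Fop p k (gen p k (x₁, x₂)), hMF _ hgen⟩ : Fin 6 → WittVector p k)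
        = Fop p k (v ⟨gen p k (x₁, x₂), hgen⟩ : Fin 6 → WittVector p k) := hvF ⟨_, hgen⟩
    have hFm : (v ⟨Vop p k m₁, hMV _ hm₁⟩ : Fin 6 → WittVector p k)
        = Vop p k (v ⟨m₁, hm₁⟩ : Fin 6 → WittVector p k) := hvV ⟨_, hm₁⟩
    rw [hVg, hFm] at h2
    have hmemc : c • (v ⟨E4 p k, hE4⟩ : Fin 6 → WittVector p k) ∈ FVN p k := by
      rw [h2]; exact Submodule.sub_mem _ (Fop_mem_FVN p k _) (Vop_mem_FVN p k _)
    obtain ⟨cu, hcu⟩ := hc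
    have : (v ⟨E4 p k, hE4⟩ : Fin 6 → WittVector p k)
        = cu⁻¹ • (c • (v ⟨E4 p k, hE4⟩ : Fin 6 → WittVector p k)) := by
      rw [← hcu, ← Units.smul_def, inv_smul_smul]
    rw [this]
    exact Submodule.smul_mem _ _ hmemc
  -- vE5 ∈ FVN
  have hvE5 : (v ⟨E5 p k, hE5⟩ : Fin 6 → WittVector p k) ∈ FVN p k := by
    have heq : (⟨E5 p k, hE5⟩ : ↥(Mmod p k (x₁, x₂))) = ⟨Fop p k (E4 p k), hMF _ hE4⟩ :=
      Subtype.ext (I5 p k).symm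
    rw [heq, hvF ⟨_, hE4⟩]
    exact Fop_mem_FVN p k _
  -- divisibility of v (p • E0)
  have hA : ∀ i, (p : WittVector p k) ∣
      (v ⟨(p : WittVector p k) • E0 p k, psmul_mem_Mmod p k _ _⟩ : Fin 6 → WittVector p k) i := by
    have haF : (v ⟨(p : WittVector p k) • E0 p k, psmul_mem_Mmod p k _ _⟩ : Fin 6 → WittVector p k)
        = Fop p k (v ⟨E1 p k, hE1⟩ : Fin 6 → WittVector p k) := by
      have heq : (⟨(p : WittVector p k) • E0 p k, psmul_mem_Mmod p k _ _⟩ : ↥(Mmod p k (x₁, x₂)))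
          = ⟨Fop p k (E1 p k), hMF _ hE1⟩ := Subtype.ext (I6 p k).symm
      rw [heq]; exact hvF ⟨_, hE1⟩
    have haV : (v ⟨(p : WittVector p k) • E0 p k, psmul_mem_Mmod p k _ _⟩ : Fin 6 → WittVector p k)
        = Vop p k (v ⟨E2 p k, hE2⟩ : Fin 6 → WittVector p k) := by
      have heq : (⟨(p : WittVector p k) • E0 p k, psmul_mem_Mmod p k _ _⟩ : ↥(Mmod p k (x₁, x₂)))
          = ⟨Vop p k (E2 p k), hMV _ hE2⟩ := Subtype.ext (I7 p k).symm
      rw [heq]; exact hvV ⟨_, hE2⟩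
    obtain ⟨hb0, hb3⟩ := (mem_FVN_iff p k _).mp hvE1
    obtain ⟨hd0, hd3⟩ := (mem_FVN_iff p k _).mp hvE2
    intro i
    fin_cases i
    · rw [haF]; simp only [Fop, six0]; exact dvd_mul_right _ _
    · rw [haF]; simp only [Fop, six1]; exact dvd_mul_right _ _
    · rw [haF]; simp only [Fop, six2]; exact dvd_σ p k hb0
    · rw [haF]; simp only [Fop, six3]; exact dvd_mul_right _ _
    · rw [haF]; simp only [Fop, six4]; exact dvd_σ p k hb3
    · rw [haV]; simp only [Vop, six5]; exact dvd_σs p k hd3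
  -- divisibility of v (p • E3)
  have hB : ∀ i, (p : WittVector p k) ∣
      (v ⟨(p : WittVector p k) • E3 p k, psmul_mem_Mmod p k _ _⟩ : Fin 6 → WittVector p k) i := by
    have haF : (v ⟨(p : WittVector p k) • E3 p k, psmul_mem_Mmod p k _ _⟩ : Fin 6 → WittVector p k)
        = Fop p k (v ⟨E5 p k, hE5⟩ : Fin 6 → WittVector p k) := by
      have heq : (⟨(p : WittVector p k) • E3 p k, psmul_mem_Mmod p k _ _⟩ : ↥(Mmod p k (x₁, x₂)))
          = ⟨Fop p k (E5 p k), hMF _ hE5⟩ := Subtype.ext (I8 p k).symm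
      rw [heq]; exact hvF ⟨_, hE5⟩
    have haV : (v ⟨(p : WittVector p k) • E3 p k, psmul_mem_Mmod p k _ _⟩ : Fin 6 → WittVector p k)
        = Vop p k (v ⟨E4 p k, hE4⟩ : Fin 6 → WittVector p k) := by
      have heq : (⟨(p : WittVector p k) • E3 p k, psmul_mem_Mmod p k _ _⟩ : ↥(Mmod p k (x₁, x₂)))
          = ⟨Vop p k (E4 p k), hMV _ hE4⟩ := Subtype.ext (I9 p k).symm
      rw [heq]; exact hvV ⟨_, hE4⟩
    obtain ⟨hb0, hb3⟩ := (mem_FVN_iff p k _).mp hvE5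
    obtain ⟨hd0, hd3⟩ := (mem_FVN_iff p k _).mp hvE4
    intro i
    fin_cases i
    · rw [haF]; simp only [Fop, six0]; exact dvd_mul_right _ _
    · rw [haF]; simp only [Fop, six1]; exact dvd_mul_right _ _
    · rw [haF]; simp only [Fop, six2]; exact dvd_σ p k hb0
    · rw [haF]; simp only [Fop, six3]; exact dvd_mul_right _ _
    · rw [haF]; simp only [Fop, six4]; exact dvd_σ p k hb3
    · rw [haV]; simp only [Vop, six5]; exact dvd_σs p k hd3
  obtain ⟨u0, hu0⟩ := pi_dvd_smul p k _ hA
  obtain ⟨u3, hu3⟩ := pi_dvd_smul p k _ hB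
  -- decomposition of a general z
  set z' : Fin 6 → WittVector p k := z - z 0 • E0 p k - z 3 • E3 p k with hz'_def
  have hz'F : z' ∈ FVN p k := by
    rw [mem_FVN_iff]
    have h0 : z' 0 = 0 := by
      simp only [hz'_def, Pi.sub_apply, Pi.smul_apply, smul_eq_mul, E0, E3, six0]
      ring
    have h3 : z' 3 = 0 := by
      simp only [hz'_def, Pi.sub_apply, Pi.smul_apply, smul_eq_mul, E0, E3, six3]
      ring
    rw [h0, h3]
    exact ⟨dvd_zero _, dvd_zero _⟩
  have keyq : (⟨(p : WittVector p k) • z, psmul_mem_Mmod p k _ z⟩ : ↥(Mmod p k (x₁, x₂)))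
      = z 0 • ⟨(p : WittVector p k) • E0 p k, psmul_mem_Mmod p k _ _⟩
        + z 3 • ⟨(p : WittVector p k) • E3 p k, psmul_mem_Mmod p k _ _⟩
        + (p : WittVector p k) • ⟨z', FVN_le_Mmod p k _ hz'F⟩ := by
    apply Subtype.ext
    simp only [Submodule.coe_add, SetLike.val_smul, hz'_def]
    module
  have h2 := congrArg
    (fun t : ↥(Mmod p k (x₁, x₂)) => ((v t : ↥P) : Fin 6 → WittVector p k)) keyq
  simp only [map_add, map_smul, Submodule.coe_add, SetLike.val_smul] at h2
  refine ⟨z 0 • u0 + z 3 • u3 + (v ⟨z', FVN_le_Mmod p k _ hz'F⟩ : Fin 6 → WittVector p k), ?_⟩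
  rw [h2, ← hu0, ← hu3]
  module


lemma build (x₁ x₂ : k) (hx₁ : x₁ ≠ 0) (hx₂ : x₂ ≠ 0)
    (hMF : ∀ z ∈ Mmod p k (x₁, x₂), Fop p k z ∈ Mmod p k (x₁, x₂))
    (hMV : ∀ z ∈ Mmod p k (x₁, x₂), Vop p k z ∈ Mmod p k (x₁, x₂))
    (P : Submodule (WittVector p k) (Fin 6 → WittVector p k))
    (v : ↥(Mmod p k (x₁, x₂)) ≃ₗ[WittVector p k] ↥P)
    (hvF : ∀ m : ↥(Mmod p k (x₁, x₂)),
      (v ⟨Fop p k (m : Fin 6 → WittVector p k), hMF _ m.2⟩ : Fin 6 → WittVector p k)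
        = Fop p k (v m : Fin 6 → WittVector p k))
    (hvV : ∀ m : ↥(Mmod p k (x₁, x₂)),
      (v ⟨Vop p k (m : Fin 6 → WittVector p k), hMV _ m.2⟩ : Fin 6 → WittVector p k)
        = Vop p k (v m : Fin 6 → WittVector p k)) :
    ∃ w0 : (Fin 6 → WittVector p k) →ₗ[WittVector p k] (Fin 6 → WittVector p k),
      ∀ z, (p : WittVector p k) • w0 z
        = (v ⟨(p : WittVector p k) • z, psmul_mem_Mmod p k _ z⟩ : Fin 6 → WittVector p k) := by
  have hp : (p : WittVector p k) ≠ 0 := WittVector.p_nonzero p k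
  have hinj : Function.Injective
      (fun u : Fin 6 → WittVector p k => (p : WittVector p k) • u) :=
    smul_right_injective _ hp
  choose key hkey using
    fun z => main_dvd p k x₁ x₂ hx₁ hx₂ hMF hMV P v hvF hvV z
  refine ⟨{ toFun := key, map_add' := ?_, map_smul' := ?_ }, fun z => hkey z⟩
  · intro a b
    apply hinj
    show (p : WittVector p k) • key (a + b) = (p : WittVector p k) • (key a + key b)
    rw [hkey, show (⟨(p : WittVector p k) • (a + b), psmul_mem_Mmod p k _ _⟩ :
        ↥(Mmod p k (x₁, x₂))) = ⟨(p : WittVector p k) • a, psmul_mem_Mmod p k _ _⟩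
        + ⟨(p : WittVector p k) • b, psmul_mem_Mmod p k _ _⟩ from Subtype.ext (by
          simp [smul_add]), map_add, Submodule.coe_add, ← hkey, ← hkey, smul_add]
  · intro c a
    apply hinj
    show (p : WittVector p k) • key (c • a) = (p : WittVector p k) • (c • key a)
    rw [hkey, show (⟨(p : WittVector p k) • (c • a), psmul_mem_Mmod p k _ _⟩ :
        ↥(Mmod p k (x₁, x₂))) = c • ⟨(p : WittVector p k) • a, psmul_mem_Mmod p k _ _⟩
        from Subtype.ext (by simp only [SetLike.val_smul]; rw [smul_comm]),
      map_smul, SetLike.val_smul, ← hkey, smul_comm]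

/-- For `x₁, x₂, y₁, y₂ ∈ k^×`, every isomorphism of Dieudonné modules
`v : M_{(x₁,x₂)} → M_{(y₁,y₂)}` (a `W`-linear bijection commuting with `F` and `V`)
extends uniquely to an isomorphism of Dieudonné modules `w : N → N` with
`w((F,V)N) = (F,V)N` and `w|_M = v`. -/
theorem stmt_9 (x₁ x₂ y₁ y₂ : k)
    (hx₁ : x₁ ≠ 0) (hx₂ : x₂ ≠ 0) (hy₁ : y₁ ≠ 0) (hy₂ : y₂ ≠ 0)
    (hMF : ∀ z ∈ Mmod p k (x₁, x₂), Fop p k z ∈ Mmod p k (x₁, x₂))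
    (hMV : ∀ z ∈ Mmod p k (x₁, x₂), Vop p k z ∈ Mmod p k (x₁, x₂))
    (hMF' : ∀ z ∈ Mmod p k (y₁, y₂), Fop p k z ∈ Mmod p k (y₁, y₂))
    (hMV' : ∀ z ∈ Mmod p k (y₁, y₂), Vop p k z ∈ Mmod p k (y₁, y₂))
    (v : ↥(Mmod p k (x₁, x₂)) ≃ₗ[WittVector p k] ↥(Mmod p k (y₁, y₂)))
    (hvF : ∀ m : ↥(Mmod p k (x₁, x₂)),
      (v ⟨Fop p k (m : Fin 6 → WittVector p k), hMF _ m.2⟩ : Fin 6 → WittVector p k)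
        = Fop p k (v m : Fin 6 → WittVector p k))
    (hvV : ∀ m : ↥(Mmod p k (x₁, x₂)),
      (v ⟨Vop p k (m : Fin 6 → WittVector p k), hMV _ m.2⟩ : Fin 6 → WittVector p k)
        = Vop p k (v m : Fin 6 → WittVector p k)) :
    ∃! w : (Fin 6 → WittVector p k) ≃ₗ[WittVector p k] (Fin 6 → WittVector p k),
      (∀ z, w (Fop p k z) = Fop p k (w z)) ∧
      (∀ z, w (Vop p k z) = Vop p k (w z)) ∧
      Submodule.map (w : (Fin 6 → WittVector p k) →ₗ[WittVector p k] (Fin 6 → WittVector p k))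
          (FVN p k) = FVN p k ∧
      (∀ m : ↥(Mmod p k (x₁, x₂)),
        w (m : Fin 6 → WittVector p k) = (v m : Fin 6 → WittVector p k)) := by
  have hp : (p : WittVector p k) ≠ 0 := WittVector.p_nonzero p k
  have hinj : Function.Injective
      (fun u : Fin 6 → WittVector p k => (p : WittVector p k) • u) :=
    smul_right_injective _ hp
  -- v.symm commutes with F and V
  have hvF' : ∀ m : ↥(Mmod p k (y₁, y₂)),
      (v.symm ⟨Fop p k (m : Fin 6 → WittVector p k), hMF' _ m.2⟩ : Fin 6 → WittVector p k)
        = Fop p k (v.symm m : Fin 6 → WittVector p k) := by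
    intro m
    have h1 := hvF (v.symm m)
    rw [LinearEquiv.apply_symm_apply] at h1
    have h2 : v ⟨Fop p k ((v.symm m : Fin 6 → WittVector p k)), hMF _ (v.symm m).2⟩
        = ⟨Fop p k (m : Fin 6 → WittVector p k), hMF' _ m.2⟩ := Subtype.ext h1
    have h3 := congrArg v.symm h2
    rw [LinearEquiv.symm_apply_apply] at h3
    rw [← h3]
  have hvV' : ∀ m : ↥(Mmod p k (y₁, y₂)),
      (v.symm ⟨Vop p k (m : Fin 6 → WittVector p k), hMV' _ m.2⟩ : Fin 6 → WittVector p k)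
        = Vop p k (v.symm m : Fin 6 → WittVector p k) := by
    intro m
    have h1 := hvV (v.symm m)
    rw [LinearEquiv.apply_symm_apply] at h1
    have h2 : v ⟨Vop p k ((v.symm m : Fin 6 → WittVector p k)), hMV _ (v.symm m).2⟩
        = ⟨Vop p k (m : Fin 6 → WittVector p k), hMV' _ m.2⟩ := Subtype.ext h1
    have h3 := congrArg v.symm h2
    rw [LinearEquiv.symm_apply_apply] at h3
    rw [← h3]
  obtain ⟨w0, hw0⟩ := build p k x₁ x₂ hx₁ hx₂ hMF hMV _ v hvF hvV
  obtain ⟨w0', hw0'⟩ := build p k y₁ y₂ hy₁ hy₂ hMF' hMV' _ v.symm hvF' hvV'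
  -- w0 commutes with Fop and Vop
  have hwF : ∀ z, w0 (Fop p k z) = Fop p k (w0 z) := by
    intro z
    apply hinj
    show (p : WittVector p k) • w0 (Fop p k z) = (p : WittVector p k) • Fop p k (w0 z)
    calc (p : WittVector p k) • w0 (Fop p k z)
        = (v ⟨(p : WittVector p k) • Fop p k z, psmul_mem_Mmod p k _ _⟩ :
            Fin 6 → WittVector p k) := hw0 _
      _ = (v ⟨Fop p k ((p : WittVector p k) • z), hMF _ (psmul_mem_Mmod p k _ z)⟩ :
            Fin 6 → WittVector p k) := by
          exact congrArg (fun t : ↥(Mmod p k (y₁, y₂)) => (t : Fin 6 → WittVector p k))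
            (congrArg v (Subtype.ext (Fop_psmul p k z).symm))
      _ = Fop p k (v ⟨(p : WittVector p k) • z, psmul_mem_Mmod p k _ z⟩ :
            Fin 6 → WittVector p k) := hvF ⟨(p : WittVector p k) • z, psmul_mem_Mmod p k _ z⟩
      _ = Fop p k ((p : WittVector p k) • w0 z) := by rw [← hw0 z]
      _ = (p : WittVector p k) • Fop p k (w0 z) := Fop_psmul p k _
  have hwV : ∀ z, w0 (Vop p k z) = Vop p k (w0 z) := by
    intro z
    apply hinj
    show (p : WittVector p k) • w0 (Vop p k z) = (p : WittVector p k) • Vop p k (w0 z)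
    calc (p : WittVector p k) • w0 (Vop p k z)
        = (v ⟨(p : WittVector p k) • Vop p k z, psmul_mem_Mmod p k _ _⟩ :
            Fin 6 → WittVector p k) := hw0 _
      _ = (v ⟨Vop p k ((p : WittVector p k) • z), hMV _ (psmul_mem_Mmod p k _ z)⟩ :
            Fin 6 → WittVector p k) := by
          exact congrArg (fun t : ↥(Mmod p k (y₁, y₂)) => (t : Fin 6 → WittVector p k))
            (congrArg v (Subtype.ext (Vop_psmul p k z).symm))
      _ = Vop p k (v ⟨(p : WittVector p k) • z, psmul_mem_Mmod p k _ z⟩ :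
            Fin 6 → WittVector p k) := hvV ⟨(p : WittVector p k) • z, psmul_mem_Mmod p k _ z⟩
      _ = Vop p k ((p : WittVector p k) • w0 z) := by rw [← hw0 z]
      _ = (p : WittVector p k) • Vop p k (w0 z) := Vop_psmul p k _
  have hwF' : ∀ z, w0' (Fop p k z) = Fop p k (w0' z) := by
    intro z
    apply hinj
    show (p : WittVector p k) • w0' (Fop p k z) = (p : WittVector p k) • Fop p k (w0' z)
    calc (p : WittVector p k) • w0' (Fop p k z)
        = (v.symm ⟨(p : WittVector p k) • Fop p k z, psmul_mem_Mmod p k _ _⟩ :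
            Fin 6 → WittVector p k) := hw0' _
      _ = (v.symm ⟨Fop p k ((p : WittVector p k) • z), hMF' _ (psmul_mem_Mmod p k _ z)⟩ :
            Fin 6 → WittVector p k) := by
          exact congrArg (fun t : ↥(Mmod p k (x₁, x₂)) => (t : Fin 6 → WittVector p k))
            (congrArg v.symm (Subtype.ext (Fop_psmul p k z).symm))
      _ = Fop p k (v.symm ⟨(p : WittVector p k) • z, psmul_mem_Mmod p k _ z⟩ :
            Fin 6 → WittVector p k) := hvF' ⟨(p : WittVector p k) • z, psmul_mem_Mmod p k _ z⟩
      _ = Fop p k ((p : WittVector p k) • w0' z) := by rw [← hw0' z]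
      _ = (p : WittVector p k) • Fop p k (w0' z) := Fop_psmul p k _
  have hwV' : ∀ z, w0' (Vop p k z) = Vop p k (w0' z) := by
    intro z
    apply hinj
    show (p : WittVector p k) • w0' (Vop p k z) = (p : WittVector p k) • Vop p k (w0' z)
    calc (p : WittVector p k) • w0' (Vop p k z)
        = (v.symm ⟨(p : WittVector p k) • Vop p k z, psmul_mem_Mmod p k _ _⟩ :
            Fin 6 → WittVector p k) := hw0' _
      _ = (v.symm ⟨Vop p k ((p : WittVector p k) • z), hMV' _ (psmul_mem_Mmod p k _ z)⟩ :
            Fin 6 → WittVector p k) := by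
          exact congrArg (fun t : ↥(Mmod p k (x₁, x₂)) => (t : Fin 6 → WittVector p k))
            (congrArg v.symm (Subtype.ext (Vop_psmul p k z).symm))
      _ = Vop p k (v.symm ⟨(p : WittVector p k) • z, psmul_mem_Mmod p k _ z⟩ :
            Fin 6 → WittVector p k) := hvV' ⟨(p : WittVector p k) • z, psmul_mem_Mmod p k _ z⟩
      _ = Vop p k ((p : WittVector p k) • w0' z) := by rw [← hw0' z]
      _ = (p : WittVector p k) • Vop p k (w0' z) := Vop_psmul p k _
  -- w0' is inverse to w0
  have hcomp1 : w0'.comp w0 = LinearMap.id := by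
    apply LinearMap.ext; intro z
    apply hinj
    show (p : WittVector p k) • w0' (w0 z) = (p : WittVector p k) • z
    rw [hw0' (w0 z),
      show (⟨(p : WittVector p k) • w0 z, psmul_mem_Mmod p k _ _⟩ : ↥(Mmod p k (y₁, y₂)))
        = v ⟨(p : WittVector p k) • z, psmul_mem_Mmod p k _ z⟩ from Subtype.ext (hw0 z),
      LinearEquiv.symm_apply_apply]
  have hcomp2 : w0.comp w0' = LinearMap.id := by
    apply LinearMap.ext; intro z
    apply hinj
    show (p : WittVector p k) • w0 (w0' z) = (p : WittVector p k) • z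
    rw [hw0 (w0' z),
      show (⟨(p : WittVector p k) • w0' z, psmul_mem_Mmod p k _ _⟩ : ↥(Mmod p k (x₁, x₂)))
        = v.symm ⟨(p : WittVector p k) • z, psmul_mem_Mmod p k _ z⟩ from Subtype.ext (hw0' z),
      LinearEquiv.apply_symm_apply]
  -- stability of FVN
  have hstab : ∀ u ∈ FVN p k, w0 u ∈ FVN p k := by
    intro u hu
    obtain ⟨a, b, rfl⟩ := FVN_decomp p k u hu
    rw [map_add, hwF, hwV]
    exact Submodule.add_mem _ (Fop_mem_FVN p k _) (Vop_mem_FVN p k _)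
  have hstab' : ∀ u ∈ FVN p k, w0' u ∈ FVN p k := by
    intro u hu
    obtain ⟨a, b, rfl⟩ := FVN_decomp p k u hu
    rw [map_add, hwF', hwV']
    exact Submodule.add_mem _ (Fop_mem_FVN p k _) (Vop_mem_FVN p k _)
  -- extension property
  have hext : ∀ m : ↥(Mmod p k (x₁, x₂)),
      w0 (m : Fin 6 → WittVector p k) = (v m : Fin 6 → WittVector p k) := by
    intro m
    apply hinj
    show (p : WittVector p k) • w0 (m : Fin 6 → WittVector p k)
        = (p : WittVector p k) • (v m : Fin 6 → WittVector p k)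
    rw [hw0,
      show (⟨(p : WittVector p k) • (m : Fin 6 → WittVector p k),
          psmul_mem_Mmod p k _ _⟩ : ↥(Mmod p k (x₁, x₂)))
        = (p : WittVector p k) • m from Subtype.ext (by simp),
      map_smul, SetLike.val_smul]
  refine ⟨LinearEquiv.ofLinear w0 w0' hcomp2 hcomp1, ⟨hwF, hwV, ?_, hext⟩, ?_⟩
  · apply le_antisymm
    · rintro _ ⟨u, hu, rfl⟩
      exact hstab u hu
    · intro u hu
      exact ⟨w0' u, hstab' u hu, LinearMap.congr_fun hcomp2 u⟩
  · intro w' ⟨h1', h2', h3', h4'⟩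
    apply LinearEquiv.ext
    intro z
    apply hinj
    show (p : WittVector p k) • w' z = (p : WittVector p k) • w0 z
    calc (p : WittVector p k) • w' z
        = w' ((p : WittVector p k) • z) := (map_smul w' _ _).symm
      _ = (v ⟨(p : WittVector p k) • z, psmul_mem_Mmod p k _ z⟩ :
            Fin 6 → WittVector p k) := h4' ⟨_, psmul_mem_Mmod p k _ z⟩
      _ = (p : WittVector p k) • w0 z := (hw0 z).symm


end Stmt9
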